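/- If p is a formal power series with p(z)(1−p(z))^3 = z^4 and p(0) = 0, then p(z) = Σ_{n≥1} (3/(4n−1)) · C(4n−1, n−1) · z^{4n}. -/

import Mathlib

open Finset

/-- Partitions of `{1,...,n}`, modelled as finpartitions of `Fin n`. -/
abbrev NCPart (n : ℕ) := Finpartition (Finset.univ : Finset (Fin n))

/-- `i` and `j` lie in the same block of `π`. -/
def SameBlock {n : ℕ} (π : NCPart n) (i j : Fin n) : Prop :=
  ∃ B ∈ π.parts, i ∈ B ∧ j ∈ B

/-- `π` is a non-crossing partition. -/
def IsNoncrossing {n : ℕ} (π : NCPart n) : Prop :=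
  ∀ i1 i2 i3 i4 : Fin n, i1 < i2 → i2 < i3 → i3 < i4 →
    SameBlock π i1 i3 → SameBlock π i2 i4 → SameBlock π i1 i2

/-- `π` is an interval partition: every block is an integer interval. -/
def IsIntervalPart {n : ℕ} (π : NCPart n) : Prop :=
  ∀ B ∈ π.parts, ∃ i j : Fin n, i ≤ j ∧ B = Finset.Icc i j

/-- The nesting order: `V ⊑ W` iff `min W ≤ min V` and `max V ≤ max W`. -/
def Nested {n : ℕ} (V W : Finset (Fin n)) : Prop :=
  W.min ≤ V.min ∧ V.max ≤ W.max

def StrictNested {n : ℕ} (V W : Finset (Fin n)) : Prop :=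
  Nested V W ∧ V ≠ W

/-- An outer block: a block maximal with respect to the nesting order. -/
def IsOuter {n : ℕ} (π : NCPart n) (W : Finset (Fin n)) : Prop :=
  W ∈ π.parts ∧ ∀ V ∈ π.parts, Nested W V → V = W

/-- `P` is the parent block of `V` in `π`. -/
def IsParent {n : ℕ} (π : NCPart n) (V P : Finset (Fin n)) : Prop :=
  P ∈ π.parts ∧ StrictNested V P ∧
    ¬ ∃ V' ∈ π.parts, StrictNested V V' ∧ StrictNested V' P

/-- `π` refines `ρ`: every block of `ρ` is a union of blocks of `π`. -/
def Refines {n : ℕ} (π ρ : NCPart n) : Prop :=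
  ∀ B ∈ π.parts, ∃ C ∈ ρ.parts, B ⊆ C

/-- The partial order `π ≪ ρ`. -/
def LL {n : ℕ} (π ρ : NCPart n) : Prop :=
  Refines π ρ ∧ ∀ W ∈ ρ.parts, ∃ V ∈ π.parts, V ⊆ W ∧ V.min = W.min ∧ V.max = W.max

/-- The colouring `c` is constant on every block of `π`. -/
def MonoChrome {n s : ℕ} (c : Fin n → Fin s) (π : NCPart n) : Prop :=
  ∀ B ∈ π.parts, ∀ i ∈ B, ∀ j ∈ B, c i = c j

/-- Vertical no-repeat property: every inner block has colour different from its parent. -/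
def VNRP {n s : ℕ} (c : Fin n → Fin s) (π : NCPart n) : Prop :=
  ∀ V P : Finset (Fin n), V ∈ π.parts → IsParent π V P →
    ∀ i ∈ V, ∀ j ∈ P, c i ≠ c j

/-- The depth of (the block of) `j` in `π`: the number of blocks strictly nesting it. -/
noncomputable def blockDepth {n : ℕ} (π : NCPart n) (j : Fin n) : ℕ :=
  Set.ncard {W : Finset (Fin n) | W ∈ π.parts ∧ ∃ B ∈ π.parts, j ∈ B ∧ StrictNested B W}

/-- `j` is the maximum of an outer block of `π`. -/
def IsOuterMax {n : ℕ} (π : NCPart n) (j : Fin n) : Prop :=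
  ∃ B, IsOuter π B ∧ j ∈ B ∧ ∀ i ∈ B, i ≤ j

/-- `j` is the minimum of an outer block of `π`. -/
def IsOuterMin {n : ℕ} (π : NCPart n) (j : Fin n) : Prop :=
  ∃ B, IsOuter π B ∧ j ∈ B ∧ ∀ i ∈ B, j ≤ i

/-- Anticommutator-friendly partitions of `{1,...,2n}` (0-indexed: odd numbers
`1,3,...,2n-1` correspond to even indices, and `2n` to index `2n-1`). -/
def ACFriendly (n : ℕ) (π : NCPart (2*n)) : Prop :=
  (∀ j : Fin (2*n), IsOuterMax π j → Even (j : ℕ) ∨ (j : ℕ) = 2*n - 1) ∧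
  (∀ j j' : Fin (2*n), Even (j : ℕ) → (j' : ℕ) = (j : ℕ) + 1 → ¬ IsOuterMax π j →
    blockDepth π j ≠ blockDepth π j')

/-- A pairing: every block has exactly two elements. -/
def IsPairing {n : ℕ} (π : NCPart n) : Prop :=
  ∀ B ∈ π.parts, B.card = 2

/-- A block-projection for `π`. -/
structure BlockProjection {n : ℕ} (π : NCPart n) where
  toFun : {B : Finset (Fin n) // B ∈ π.parts} → {B : Finset (Fin n) // B ∈ π.parts}
  idem : ∀ A, toFun (toFun A) = toFun A
  mono : ∀ A B, Nested A.val B.val → Nested (toFun A).val (toFun B).val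
  le_apply : ∀ A, Nested A.val (toFun A).val

namespace LagrangeAux

open PowerSeries


noncomputable def th (f : PowerSeries ℂ) : PowerSeries ℂ := X * d⁄dX ℂ f

lemma th_add (f g : PowerSeries ℂ) : th (f + g) = th f + th g := by
  unfold th; rw [map_add]; ring

lemma th_sub (f g : PowerSeries ℂ) : th (f - g) = th f - th g := by
  unfold th; rw [map_sub]; ring

lemma th_mul (f g : PowerSeries ℂ) : th (f * g) = th f * g + f * th g := by
  unfold th; rw [Derivation.leibniz]; simp only [smul_eq_mul]; ring

lemma th_one : th 1 = 0 := by unfold th; simp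

lemma th_X : th X = X := by unfold th; simp

lemma th_ofNat (n : ℕ) [n.AtLeastTwo] : th (OfNat.ofNat n : PowerSeries ℂ) = 0 := by
  unfold th; rw [← Nat.cast_ofNat, Derivation.map_natCast]; ring

lemma th_pow (f : PowerSeries ℂ) (n : ℕ) : th (f ^ n) = (n : PowerSeries ℂ) * f ^ (n-1) * th f := by
  unfold th; rw [Derivation.leibniz_pow]; simp only [smul_eq_mul]; push_cast; ring

lemma coeff_th (n : ℕ) (f : PowerSeries ℂ) : coeff n (th f) = n * coeff n f := by
  cases n with
  | zero => unfold th; simp [coeff_zero_eq_constantCoeff]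
  | succ n => unfold th; rw [coeff_succ_X_mul, coeff_derivative]; push_cast; ring

variable {p : PowerSeries ℂ}

lemma one_sub_ne (h0 : constantCoeff p = 0) : (1 - p : PowerSeries ℂ) ≠ 0 := by
  intro h; have := congrArg constantCoeff h; simp [h0] at this

lemma one_sub4_ne (h0 : constantCoeff p = 0) : (1 - 4*p : PowerSeries ℂ) ≠ 0 := by
  intro h; have := congrArg constantCoeff h; simp [h0] at this

lemma T1 (h0 : constantCoeff p = 0) (heq : p * (1 - p)^3 = X^4) :
    th p * (1 - 4*p) = 4*p - 4*p^2 := by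
  have hd := congrArg th heq
  rw [th_mul, th_pow, th_pow, th_sub, th_one, th_X] at hd
  push_cast at hd
  apply mul_right_cancel₀ (pow_ne_zero 2 (one_sub_ne h0))
  linear_combination hd - 4 * heq

lemma T2 (h0 : constantCoeff p = 0) (heq : p * (1 - p)^3 = X^4) :
    th (th p) * (1 - 4*p)^3 = 16*p - 48*p^2 + 96*p^3 - 64*p^4 := by
  have t1 := T1 h0 heq
  have hd := congrArg th t1
  simp only [th_mul, th_sub, th_add, th_pow, th_one, th_ofNat 4, th_ofNat 16,
    th_ofNat 48, th_ofNat 96, th_ofNat 64, th_ofNat 256, th_ofNat 1408,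
    th_ofNat 2048, th_ofNat 1024] at hd
  push_cast at hd
  linear_combination (1-4*p)^2 * hd +
    (4*(th p)*(1-4*p) + 4*(4*p-4*p^2) + (4-8*p)*(1-4*p)) * t1

lemma T3 (h0 : constantCoeff p = 0) (heq : p * (1 - p)^3 = X^4) :
    th (th (th p)) * (1 - 4*p)^5 =
      64*p + 64*p^2 + 256*p^3 - 1408*p^4 + 2048*p^5 - 1024*p^6 := by
  have t1 := T1 h0 heq
  have t2 := T2 h0 heq
  have hd := congrArg th t2
  simp only [th_mul, th_sub, th_add, th_pow, th_one, th_ofNat 4, th_ofNat 16,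
    th_ofNat 48, th_ofNat 96, th_ofNat 64, th_ofNat 256, th_ofNat 1408,
    th_ofNat 2048, th_ofNat 1024] at hd
  push_cast at hd
  linear_combination (1-4*p)^2 * hd + (12*(th p)*(1-4*p)) * t2 +
    (12*(16*p - 48*p^2 + 96*p^3 - 64*p^4) + (1-4*p)*(16 - 96*p + 288*p^2 - 256*p^3)) * t1

lemma T4 (h0 : constantCoeff p = 0) (heq : p * (1 - p)^3 = X^4) :
    th (th (th (th p))) * (1 - 4*p)^7 =
      256*p + 4352*p^2 + 1536*p^3 - 20480*p^4 + 32768*p^5 - 43008*p^6 + 40960*p^7 - 16384*p^8 := by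
  have t1 := T1 h0 heq
  have t3 := T3 h0 heq
  have hd := congrArg th t3
  simp only [th_mul, th_sub, th_add, th_pow, th_one, th_ofNat 4, th_ofNat 16,
    th_ofNat 48, th_ofNat 96, th_ofNat 64, th_ofNat 256, th_ofNat 1408,
    th_ofNat 2048, th_ofNat 1024] at hd
  push_cast at hd
  linear_combination (1-4*p)^2 * hd + (20*(th p)*(1-4*p)) * t3 +
    (20*(64*p + 64*p^2 + 256*p^3 - 1408*p^4 + 2048*p^5 - 1024*p^6)
      + (1-4*p)*(64 + 128*p + 768*p^2 - 5632*p^3 + 10240*p^4 - 6144*p^5)) * t1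

lemma Eq5 (h0 : constantCoeff p = 0) (heq : p * (1 - p)^3 = X^4) :
    27*th (th (th (th p))) - 216*th (th (th p)) + 528*th (th p) - 384*th p =
      X^4 * (256*(th (th (th (th p))) + 2*th (th (th p)) - th (th p) - 2*th p)) := by
  have t1 := T1 h0 heq
  have t2 := T2 h0 heq
  have t3 := T3 h0 heq
  have t4 := T4 h0 heq
  apply mul_right_cancel₀ (pow_ne_zero 7 (one_sub4_ne h0))
  linear_combination (27 - 256*(X:PowerSeries ℂ)^4) * t4
    + (-216 - 512*(X:PowerSeries ℂ)^4) * (1-4*p)^2 * t3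
    + (528 + 256*(X:PowerSeries ℂ)^4) * (1-4*p)^4 * t2
    + (-384 + 512*(X:PowerSeries ℂ)^4) * (1-4*p)^6 * t1
    + (92160*p + 1013760*p^2 - 368640*p^3 - 737280*p^4) * heq


lemma coeff_ofNat_mul (m : ℕ) [m.AtLeastTwo] (k : ℕ) (f : PowerSeries ℂ) :
    coeff k ((OfNat.ofNat m : PowerSeries ℂ) * f) = (OfNat.ofNat m : ℂ) * coeff k f := by
  rw [← map_ofNat C m, coeff_C_mul]


lemma hrec (E5 : 27*th (th (th (th p))) - 216*th (th (th p)) + 528*th (th p) - 384*th p =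
      X^4 * (256*(th (th (th (th p))) + 2*th (th (th p)) - th (th p) - 2*th p))) (n : ℕ) :
    (27*((n:ℂ)+4)^4 - 216*((n:ℂ)+4)^3 + 528*((n:ℂ)+4)^2 - 384*((n:ℂ)+4)) * coeff (n+4) p
      = 256*((n:ℂ)^4 + 2*(n:ℂ)^3 - (n:ℂ)^2 - 2*(n:ℂ)) * coeff n p := by
  have h := congrArg (coeff (n+4)) E5
  rw [coeff_X_pow_mul] at h
  simp only [map_sub, map_add, coeff_ofNat_mul 27, coeff_ofNat_mul 216, coeff_ofNat_mul 528,
    coeff_ofNat_mul 384, coeff_ofNat_mul 256, coeff_ofNat_mul 2, coeff_th] at h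
  push_cast at h
  linear_combination h

lemma low (E5 : 27*th (th (th (th p))) - 216*th (th (th p)) + 528*th (th p) - 384*th p =
      X^4 * (256*(th (th (th (th p))) + 2*th (th (th p)) - th (th p) - 2*th p)))
    (k : ℕ) (hk : k < 4) (hk0 : 0 < k) : coeff k p = 0 := by
  have h := congrArg (coeff k) E5
  rw [coeff_X_pow_mul'] at h
  rw [if_neg (by omega)] at h
  simp only [map_sub, map_add, coeff_ofNat_mul 27, coeff_ofNat_mul 216, coeff_ofNat_mul 528,
    coeff_ofNat_mul 384, coeff_th] at h
  interval_cases k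
  · push_cast at h; linear_combination (-1/45 : ℂ) * h
  · push_cast at h; linear_combination (1/48 : ℂ) * h
  · push_cast at h; linear_combination (-1/45 : ℂ) * h

lemma a4eq (h0 : constantCoeff p = 0) (heq : p * (1 - p)^3 = X^4)
    (h1 : coeff 1 p = 0) (h2 : coeff 2 p = 0) (h3 : coeff 3 p = 0) :
    coeff 4 p = 1 := by
  have hdvd : (X : PowerSeries ℂ)^4 ∣ p := by
    rw [X_pow_dvd_iff]
    intro m hm
    interval_cases m
    · rw [coeff_zero_eq_constantCoeff]; exact h0
    · exact h1
    · exact h2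
    · exact h3
  obtain ⟨g, hg⟩ := hdvd
  have hX : (X : PowerSeries ℂ)^4 ≠ 0 := pow_ne_zero _ X_ne_zero
  have hg1 : g * (1-p)^3 = 1 := by
    apply mul_left_cancel₀ hX
    rw [← mul_assoc, ← hg, heq, mul_one]
  have hcc := congrArg constantCoeff hg1
  simp only [map_mul, map_pow, map_sub, map_one, h0, sub_zero, one_pow, mul_one] at hcc
  have h4 : coeff (0+4) p = coeff 0 g := by rw [hg, coeff_X_pow_mul]
  simpa [coeff_zero_eq_constantCoeff, hcc] using h4

noncomputable def cfun (m : ℕ) : ℂ := (3 / (4*(m:ℂ) - 1)) * (Nat.choose (4*m-1) (m-1) : ℂ)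

noncomputable def bfun (k : ℕ) : ℂ := if k % 4 = 0 ∧ 1 ≤ k then cfun (k/4) else 0

lemma cfun_succ (i : ℕ) :
    cfun (i+1) = 3/((4*i+3 : ℕ):ℂ) * (Nat.choose (4*i+3) i : ℂ) := by
  unfold cfun
  rw [show 4*(i+1)-1 = 4*i+3 from by omega, show (i+1)-1 = i from by omega]
  have hden : 4*((i+1 : ℕ):ℂ) - 1 = ((4*i+3 : ℕ):ℂ) := by push_cast; ring
  rw [hden]

lemma cratio (i : ℕ) :
    ((i:ℂ)+2)*(3*(i:ℂ)+3)*(3*(i:ℂ)+4)*(3*(i:ℂ)+5) * cfun (i+2) =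
      (4*(i:ℂ)+4)*(4*(i:ℂ)+3)*(4*(i:ℂ)+5)*(4*(i:ℂ)+6) * cfun (i+1) := by
  have e2 : cfun (i+2) = 3/((4*i+7 : ℕ):ℂ) * (Nat.choose (4*i+7) (i+1) : ℂ) := by
    have h := cfun_succ (i+1)
    rw [show 4*(i+1)+3 = 4*i+7 from by omega] at h
    rw [show i+2 = i+1+1 from rfl, h]
  rw [e2, cfun_succ]
  have hc1 : (Nat.choose (4*i+7) (i+1) : ℂ) =
      ((4*i+7).factorial : ℂ) / (((i+1).factorial : ℂ) * ((3*i+6).factorial : ℂ)) := by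
    rw [Nat.cast_choose ℂ (show i+1 ≤ 4*i+7 from by omega),
      show 4*i+7-(i+1) = 3*i+6 from by omega]
  have hc2 : (Nat.choose (4*i+3) i : ℂ) =
      ((4*i+3).factorial : ℂ) / ((i.factorial : ℂ) * ((3*i+3).factorial : ℂ)) := by
    rw [Nat.cast_choose ℂ (show i ≤ 4*i+3 from by omega),
      show 4*i+3-i = 3*i+3 from by omega]
  have a1 : (4*i+4).factorial = (4*i+4)*(4*i+3).factorial := by
    have h := Nat.factorial_succ (4*i+3)
    rwa [show 4*i+3+1 = 4*i+4 from by omega] at h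
  have a2 : (4*i+5).factorial = (4*i+5)*(4*i+4).factorial := by
    have h := Nat.factorial_succ (4*i+4)
    rwa [show 4*i+4+1 = 4*i+5 from by omega] at h
  have a3 : (4*i+6).factorial = (4*i+6)*(4*i+5).factorial := by
    have h := Nat.factorial_succ (4*i+5)
    rwa [show 4*i+5+1 = 4*i+6 from by omega] at h
  have a4 : (4*i+7).factorial = (4*i+7)*(4*i+6).factorial := by
    have h := Nat.factorial_succ (4*i+6)
    rwa [show 4*i+6+1 = 4*i+7 from by omega] at h
  have f1 : (4*i+7).factorial = (4*i+7)*((4*i+6)*((4*i+5)*((4*i+4)*(4*i+3).factorial))) := by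
    rw [a4, a3, a2, a1]
  have b1 : (3*i+4).factorial = (3*i+4)*(3*i+3).factorial := by
    have h := Nat.factorial_succ (3*i+3)
    rwa [show 3*i+3+1 = 3*i+4 from by omega] at h
  have b2 : (3*i+5).factorial = (3*i+5)*(3*i+4).factorial := by
    have h := Nat.factorial_succ (3*i+4)
    rwa [show 3*i+4+1 = 3*i+5 from by omega] at h
  have b3 : (3*i+6).factorial = (3*i+6)*(3*i+5).factorial := by
    have h := Nat.factorial_succ (3*i+5)
    rwa [show 3*i+5+1 = 3*i+6 from by omega] at h
  have f2 : (3*i+6).factorial = (3*i+6)*((3*i+5)*((3*i+4)*(3*i+3).factorial)) := by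
    rw [b3, b2, b1]
  have c1 : (i+1).factorial = (i+1)*i.factorial := Nat.factorial_succ i
  have d1 : ((4*i+3).factorial : ℂ) ≠ 0 := Nat.cast_ne_zero.2 (Nat.factorial_ne_zero _)
  have d2 : ((3*i+3).factorial : ℂ) ≠ 0 := Nat.cast_ne_zero.2 (Nat.factorial_ne_zero _)
  have d3 : ((i).factorial : ℂ) ≠ 0 := Nat.cast_ne_zero.2 (Nat.factorial_ne_zero _)
  have d1' : (((i+1)).factorial : ℂ) ≠ 0 := Nat.cast_ne_zero.2 (Nat.factorial_ne_zero _)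
  have d2' : ((3*i+6).factorial : ℂ) ≠ 0 := Nat.cast_ne_zero.2 (Nat.factorial_ne_zero _)
  have d4 : ((4*i+7 : ℕ):ℂ) ≠ 0 := Nat.cast_ne_zero.2 (by omega)
  have d5 : ((4*i+3 : ℕ):ℂ) ≠ 0 := Nat.cast_ne_zero.2 (by omega)
  have L : ((i:ℂ)+2)*(3*(i:ℂ)+3)*(3*(i:ℂ)+4)*(3*(i:ℂ)+5) *
        (3/((4*i+7 : ℕ):ℂ) * (Nat.choose (4*i+7) (i+1) : ℂ))
      = (3*(((i:ℂ)+2)*(3*(i:ℂ)+3)*(3*(i:ℂ)+4)*(3*(i:ℂ)+5))*((4*i+7).factorial : ℂ))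
        / (((4*i+7 : ℕ):ℂ) * (((i+1).factorial : ℂ) * ((3*i+6).factorial : ℂ))) := by
    rw [hc1]; ring
  have R : (4*(i:ℂ)+4)*(4*(i:ℂ)+3)*(4*(i:ℂ)+5)*(4*(i:ℂ)+6) *
        (3/((4*i+3 : ℕ):ℂ) * (Nat.choose (4*i+3) i : ℂ))
      = (3*((4*(i:ℂ)+4)*(4*(i:ℂ)+3)*(4*(i:ℂ)+5)*(4*(i:ℂ)+6))*((4*i+3).factorial : ℂ))
        / (((4*i+3 : ℕ):ℂ) * ((i.factorial : ℂ) * ((3*i+3).factorial : ℂ))) := by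
    rw [hc2]; ring
  rw [L, R, div_eq_div_iff (mul_ne_zero d4 (mul_ne_zero d1' d2'))
    (mul_ne_zero d5 (mul_ne_zero d3 d2))]
  push_cast [f1, f2, c1]
  ring


lemma main (h0 : constantCoeff p = 0) (heq : p * (1 - p)^3 = X^4) :
    ∀ k, coeff k p = bfun k := by
  have E5 := Eq5 h0 heq
  have h1 := low E5 1 (by omega) (by omega)
  have h2 := low E5 2 (by omega) (by omega)
  have h3 := low E5 3 (by omega) (by omega)
  have h4 := a4eq h0 heq h1 h2 h3
  intro k
  induction k using Nat.strong_induction_on with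
  | _ k IH =>
    rcases (show k < 5 ∨ 5 ≤ k from by omega) with hk | hk
    · interval_cases k
      · simpa [bfun, coeff_zero_eq_constantCoeff] using h0
      · simp [bfun, h1]
      · simp [bfun, h2]
      · simp [bfun, h3]
      · rw [h4]; unfold bfun cfun; norm_num
    · obtain ⟨j, rfl⟩ : ∃ j, k = j+5 := ⟨k-5, by omega⟩
      have hr := hrec E5 (j+1)
      rw [show j+1+4 = j+5 from by omega] at hr
      have hIH := IH (j+1) (by omega)
      rw [hIH] at hr
      push_cast at hr
      by_cases hm : (j+1) % 4 = 0
      · obtain ⟨i, hi⟩ : ∃ i, j+1 = 4*(i+1) := ⟨(j+1)/4-1, by omega⟩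
        have hj : (j:ℂ) = 4*(i:ℂ)+3 := by
          have hc := congrArg (Nat.cast : ℕ → ℂ) hi
          push_cast at hc
          linear_combination hc
        have hb1 : bfun (j+1) = cfun (i+1) := by
          unfold bfun
          rw [if_pos ⟨hm, by omega⟩, show (j+1)/4 = i+1 from by omega]
        have hb2 : bfun (j+5) = cfun (i+2) := by
          unfold bfun
          rw [if_pos ⟨by omega, by omega⟩, show (j+5)/4 = i+2 from by omega]
        rw [hb1, hj] at hr
        rw [hb2]
        have hAne : (256*(((i:ℂ)+2)*(3*(i:ℂ)+3)*(3*(i:ℂ)+4)*(3*(i:ℂ)+5))) ≠ 0 := by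
          have hp : ((256*((i+2)*(3*i+3)*(3*i+4)*(3*i+5)) : ℕ) : ℂ) ≠ 0 :=
            Nat.cast_ne_zero.2 (by positivity)
          push_cast at hp
          intro h; apply hp; linear_combination h
        apply mul_left_cancel₀ hAne
        linear_combination hr - 256 * cratio i
      · have hb1 : bfun (j+1) = 0 := by unfold bfun; rw [if_neg]; rintro ⟨h, -⟩; exact hm h
        have hb2 : bfun (j+5) = 0 := by
          unfold bfun; rw [if_neg]; rintro ⟨h, -⟩; apply hm; omega
        rw [hb1, mul_zero] at hr
        rw [hb2]
        have hAne : (27*(((j:ℂ)+1)+4)^4 - 216*(((j:ℂ)+1)+4)^3 + 528*(((j:ℂ)+1)+4)^2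
            - 384*(((j:ℂ)+1)+4)) ≠ 0 := by
          have hp : (((j+5)*(3*(j+1))*(3*(j+1)+4)*(3*(j+1)+8) : ℕ) : ℂ) ≠ 0 :=
            Nat.cast_ne_zero.2 (by positivity)
          push_cast at hp
          intro h; apply hp; linear_combination h
        rcases mul_eq_zero.1 hr with h | h
        · exact absurd h hAne
        · exact h

end LagrangeAux

/-- Lagrange inversion instance: if `p ∈ ℂ[[z]]` has `p(0) = 0` and
`p(z)(1−p(z))³ = z⁴`, then `p(z) = Σ_{n≥1} (3/(4n−1))·C(4n−1,n−1)·z^{4n}`. -/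
theorem lagrange_inversion_instance (p : PowerSeries ℂ)
    (h0 : PowerSeries.constantCoeff p = 0)
    (heq : p * (1 - p)^3 = PowerSeries.X^4) :
    (∀ n : ℕ, 1 ≤ n →
        PowerSeries.coeff (4*n) p =
          (3 / (4*(n:ℂ) - 1)) * (Nat.choose (4*n-1) (n-1) : ℂ)) ∧
    (∀ k : ℕ, (¬ ∃ n : ℕ, 1 ≤ n ∧ k = 4*n) → PowerSeries.coeff k p = 0) := by
  have hmain := LagrangeAux.main h0 heq
  constructor
  · intro n hn
    rw [hmain (4*n)]
    unfold LagrangeAux.bfun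
    rw [if_pos ⟨by omega, by omega⟩, show 4*n/4 = n from by omega]
    rfl
  · intro k hk
    rw [hmain k]
    unfold LagrangeAux.bfun
    rw [if_neg]
    rintro ⟨hm, hk1⟩
    exact hk ⟨k/4, by omega, by omega⟩
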